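/- arXiv:2108.01297 — 2 statements merged into one kernel-verified Lean document; each statement's English description precedes it below -/
import Mathlib

section
/- Let H, V be Hilbert spaces with V ↪ H dense and continuous, V_h ⊆ V a closed subspace, and B : V × V → ℝ bounded and coercive with coercivity constant α₀ > 0. Let θ : [0,T] → V_h be continuously differentiable with θ(0) = 0 and satisfy, for all v ∈ V_h and t ∈ [0,T], (θ'(t), v)_H + B(θ(t), v) = G(t)(v), where G(t) is a linear functional on V with |G(t)(v)| ≤ g(t)‖v‖_V for some g ∈ L²(0,T). Then sup_{t∈[0,T]} ‖θ(t)‖_H² + α₀ ∫₀ᵀ ‖θ(t)‖_V² dt ≤ C ∫₀ᵀ g(t)² dt, with C depending only on α₀. -/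
open MeasureTheory Set

/-! Testing the equation with `v = θ(t)` and using coercivity and Young's inequality gives
`d/dt ‖θ‖_H² + 2α₀‖θ‖_V² ≤ 2 g ‖θ‖_V ≤ g²/α₀ + α₀‖θ‖_V²`.
Integrating from `0`, where `θ = 0`, gives
`‖θ(τ)‖_H² + α₀ ∫₀^τ ‖θ‖_V² ≤ α₀⁻¹ ∫₀^τ g²` for every `τ ≤ T`,
which bounds each term of the claim by `α₀⁻¹ ∫₀ᵀ g²`; so `C = 2 / α₀`. -/

lemma two_mul_add_mul_sq_le_sq_div {a b c g n α : ℝ} (hα : 0 < α) (habc : a + b = c)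
    (hc : c ≤ g * n) (hb : α * n ^ 2 ≤ b) :
    2 * a + α * n ^ 2 ≤ g ^ 2 / α := by
  rw [le_div_iff₀ hα]
  nlinarith [sq_nonneg (g - α * n)]

lemma sub_add_integral_le_of_hasDerivAt_add_le {F F' k m : ℝ → ℝ} {a b : ℝ} (hab : a ≤ b)
    (hF : ∀ s ∈ Icc a b, HasDerivAt F (F' s) s) (hF' : IntervalIntegrable F' volume a b)
    (hk : IntervalIntegrable k volume a b) (hm : IntervalIntegrable m volume a b)
    (hle : ∀ s ∈ Icc a b, F' s + k s ≤ m s) :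
    F b - F a + ∫ s in a..b, k s ≤ ∫ s in a..b, m s := by
  have hFTC : ∫ s in a..b, F' s = F b - F a :=
    intervalIntegral.integral_eq_sub_of_hasDerivAt (uIcc_of_le hab ▸ hF) hF'
  rw [← hFTC, ← intervalIntegral.integral_add hF' hk]
  exact intervalIntegral.integral_mono_on hab (hF'.add hk) hm hle

theorem energy_estimate {H V : Type*} [NormedAddCommGroup H] [InnerProductSpace ℝ H]
    [NormedAddCommGroup V] [InnerProductSpace ℝ V] (j : V →L[ℝ] H)
    {α : ℝ} (hα : 0 < α) (B : V →ₗ[ℝ] V →ₗ[ℝ] ℝ)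
    (hcoer : ∀ v, α * ‖v‖ ^ 2 ≤ B v v) {τ : ℝ} (hτ : 0 ≤ τ) {θ θ' : ℝ → V}
    (G : ℝ → V →ₗ[ℝ] ℝ) {g : ℝ → ℝ} (hθ : ∀ t ∈ Icc 0 τ, HasDerivAt θ (θ' t) t)
    (hθ' : ContinuousOn θ' (Icc 0 τ)) (h0 : θ 0 = 0)
    (heq : ∀ t ∈ Icc 0 τ, inner ℝ (j (θ' t)) (j (θ t)) + B (θ t) (θ t) = G t (θ t))
    (hG : ∀ t ∈ Icc 0 τ, G t (θ t) ≤ g t * ‖θ t‖)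
    (hg : IntervalIntegrable (fun t => g t ^ 2) volume 0 τ) :
    ‖j (θ τ)‖ ^ 2 + α * ∫ t in (0:ℝ)..τ, ‖θ t‖ ^ 2 ≤ α⁻¹ * ∫ t in (0:ℝ)..τ, g t ^ 2 := by
  have hθc : ContinuousOn θ (Icc 0 τ) := fun t ht =>
    (hθ t ht).continuousAt.continuousWithinAt
  have hint {f : ℝ → ℝ} (hf : ContinuousOn f (Icc 0 τ)) : IntervalIntegrable f volume 0 τ :=
    (uIcc_of_le hτ ▸ hf).intervalIntegrable
  have henergy : ∀ t ∈ Icc 0 τ, HasDerivAt (fun s => ‖j (θ s)‖ ^ 2)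
      (2 * inner ℝ (j (θ t)) (j (θ' t))) t :=
    fun t ht => (j.hasFDerivAt.comp_hasDerivAt t (hθ t ht)).norm_sq
  have hdissipation : ∀ t ∈ Icc 0 τ,
      2 * inner ℝ (j (θ t)) (j (θ' t)) + α * ‖θ t‖ ^ 2 ≤ g t ^ 2 / α := fun t ht =>
    two_mul_add_mul_sq_le_sq_div hα (real_inner_comm (j (θ t)) _ ▸ heq t ht)
      (hG t ht) (hcoer (θ t))
  have key := sub_add_integral_le_of_hasDerivAt_add_le (k := fun t => α * ‖θ t‖ ^ 2)
    hτ henergy (hint (continuousOn_const.mul ((j.continuous.comp_continuousOn hθc).inner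
      (j.continuous.comp_continuousOn hθ'))))
    (hint (continuousOn_const.mul (hθc.norm.pow 2))) (hg.div_const α) hdissipation
  rw [h0, map_zero, norm_zero, zero_pow two_ne_zero, sub_zero,
    intervalIntegral.integral_const_mul, intervalIntegral.integral_div] at key
  rwa [div_eq_inv_mul] at key

theorem stmt_10_general {H V : Type*} [NormedAddCommGroup H] [InnerProductSpace ℝ H]
    [NormedAddCommGroup V] [InnerProductSpace ℝ V]
    (j : V →L[ℝ] H)
    (α₀ : ℝ) (hα₀ : 0 < α₀) :
    ∃ C : ℝ, 0 < C ∧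
      ∀ (B : V →ₗ[ℝ] V →ₗ[ℝ] ℝ) (M : ℝ),
        (∀ v w : V, |B v w| ≤ M * ‖v‖ * ‖w‖) →
        (∀ v : V, B v v ≥ α₀ * ‖v‖ ^ 2) →
        ∀ (Vh : Submodule ℝ V), IsClosed (Vh : Set V) →
        ∀ (T : ℝ), 0 < T →
        ∀ (θ θ' : ℝ → V) (G : ℝ → V →ₗ[ℝ] ℝ) (g : ℝ → ℝ),
          (∀ t, θ t ∈ Vh) →
          (∀ t ∈ Set.Icc 0 T, HasDerivAt θ (θ' t) t) →
          Continuous θ' →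
          θ 0 = 0 →
          (∀ t ∈ Set.Icc 0 T, ∀ v ∈ Vh,
            (inner ℝ (j (θ' t)) (j v) : ℝ) + B (θ t) v = G t v) →
          (∀ t ∈ Set.Icc 0 T, ∀ v : V, |G t v| ≤ g t * ‖v‖) →
          IntervalIntegrable (fun t => (g t) ^ 2) volume 0 T →
          ∀ t ∈ Set.Icc 0 T,
            ‖j (θ t)‖ ^ 2 + α₀ * ∫ s in (0:ℝ)..T, ‖θ s‖ ^ 2
              ≤ C * ∫ s in (0:ℝ)..T, (g s) ^ 2 := by
  refine ⟨2 / α₀, by positivity, ?_⟩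
  intro B M _ hcoer Vh _ T hT θ θ' G g hmem hθ hθ' h0 heq hG hg t ht
  have estimate : ∀ τ ∈ Icc 0 T, ‖j (θ τ)‖ ^ 2 + α₀ * ∫ s in (0:ℝ)..τ, ‖θ s‖ ^ 2
      ≤ α₀⁻¹ * ∫ s in (0:ℝ)..τ, g s ^ 2 := fun τ hτ =>
    have hsub : Icc 0 τ ⊆ Icc 0 T := Icc_subset_Icc_right hτ.2
    energy_estimate j hα₀ B hcoer hτ.1 G (fun s hs => hθ s (hsub hs)) hθ'.continuousOn h0
      (fun s hs => heq s (hsub hs) _ (hmem s))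
      (fun s hs => (abs_le.mp (hG s (hsub hs) _)).2)
      (hg.mono_set (by simp only [uIcc_of_le hτ.1, uIcc_of_le hT.le, hsub]))
  have hθt := estimate t ht
  have hθT := estimate T ⟨hT.le, le_rfl⟩
  have hθ_nonneg : 0 ≤ ∫ s in (0:ℝ)..t, ‖θ s‖ ^ 2 :=
    intervalIntegral.integral_nonneg ht.1 fun s _ => by positivity
  have hg_mono : ∫ s in (0:ℝ)..t, g s ^ 2 ≤ ∫ s in (0:ℝ)..T, g s ^ 2 :=
    intervalIntegral.integral_mono_interval le_rfl ht.1 ht.2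
      (Filter.Eventually.of_forall fun s => by positivity) hg
  have hjθT : 0 ≤ ‖j (θ T)‖ ^ 2 := by positivity
  rw [div_eq_mul_inv, mul_comm 2, mul_assoc, two_mul, mul_add]
  linarith [mul_le_mul_of_nonneg_left hg_mono (inv_pos.mpr hα₀).le,
    mul_nonneg hα₀.le hθ_nonneg]

/-- Abstract energy estimate underlying Lemma 4.1 and Theorem 5.2: for a
parabolic-type evolution in a subspace `V_h` driven by a functional `G(t)` with
`|G(t)v| ≤ g(t)‖v‖_V`, one has
`sup_t ‖θ(t)‖_H² + α₀ ∫₀ᵀ ‖θ‖_V² ≤ C ∫₀ᵀ g²` with `C = C(α₀)`. -/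
theorem stmt_10 {H V : Type*} [NormedAddCommGroup H] [InnerProductSpace ℝ H]
    [NormedAddCommGroup V] [InnerProductSpace ℝ V] [CompleteSpace V]
    (j : V →L[ℝ] H) (hjdense : DenseRange j)
    (α₀ : ℝ) (hα₀ : 0 < α₀) :
    ∃ C : ℝ, 0 < C ∧
      ∀ (B : V →ₗ[ℝ] V →ₗ[ℝ] ℝ) (M : ℝ),
        (∀ v w : V, |B v w| ≤ M * ‖v‖ * ‖w‖) →
        (∀ v : V, B v v ≥ α₀ * ‖v‖ ^ 2) →
        ∀ (Vh : Submodule ℝ V), IsClosed (Vh : Set V) →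
        ∀ (T : ℝ), 0 < T →
        ∀ (θ θ' : ℝ → V) (G : ℝ → V →ₗ[ℝ] ℝ) (g : ℝ → ℝ),
          (∀ t, θ t ∈ Vh) →
          (∀ t ∈ Set.Icc 0 T, HasDerivAt θ (θ' t) t) →
          Continuous θ' →
          θ 0 = 0 →
          (∀ t ∈ Set.Icc 0 T, ∀ v ∈ Vh,
            (inner ℝ (j (θ' t)) (j v) : ℝ) + B (θ t) v = G t v) →
          (∀ t ∈ Set.Icc 0 T, ∀ v : V, |G t v| ≤ g t * ‖v‖) →
          IntervalIntegrable (fun t => (g t) ^ 2) volume 0 T →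
          ∀ t ∈ Set.Icc 0 T,
            ‖j (θ t)‖ ^ 2 + α₀ * ∫ s in (0:ℝ)..T, ‖θ s‖ ^ 2
              ≤ C * ∫ s in (0:ℝ)..T, (g s) ^ 2 :=
  stmt_10_general j α₀ hα₀
end

section
/- Let a, b ∈ L²(0,T) be nonnegative, let y : [0,T] → [0,∞) be continuous with y(0) = 0, and suppose y(t)² ≤ A h^{2q} + ∫₀ᵗ (C₁ + C₂ h^{−γ} y(s)²) y(s)² ds for all t ∈ [0,T], where A, C₁, C₂, γ > 0 and additionally ∫₀ᵀ y(s)² ds ≤ K h^{2q} with 2q > γ. Then for h sufficiently small, y(t)² ≤ C h^{2q} for all t ∈ [0,T], with C independent of h. -/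
open MeasureTheory

/-!
Evaluate the integral inequality at a point `t₀ ≤ t` where `y²` attains its maximum `M` on
`[0, t]`. Bounding the quartic term by `c M y²` and the remaining integral by the a priori bound
`I ≥ ∫₀ᵀ y²` gives `M ≤ a + b I + (c I) M`. With `c = C₂ h^{-γ}` and `I = K h^{2q}` the factor
`c I = C₂ K h^{2q-γ}` is at most `1/2` for small `h` because `2q > γ`, so the quartic term is
absorbed and `M ≤ 2 (a + b I)`.
-/

lemma le_two_mul_of_le_add_mul_self {M a c : ℝ} (hM : 0 ≤ M) (hc : c ≤ 1 / 2)
    (h : M ≤ a + c * M) : M ≤ 2 * a := by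
  nlinarith

lemma intervalIntegral_quartic_le {y : ℝ → ℝ} (hy : Continuous y) {b c M t : ℝ}
    (hc : 0 ≤ c) (ht : 0 ≤ t) (hM : ∀ s ∈ Set.Icc 0 t, y s ^ 2 ≤ M) :
    ∫ s in (0:ℝ)..t, (b + c * y s ^ 2) * y s ^ 2 ≤ (b + c * M) * ∫ s in (0:ℝ)..t, y s ^ 2 := by
  rw [← intervalIntegral.integral_const_mul]
  refine intervalIntegral.integral_mono_on ht
    ((by fun_prop : Continuous _).intervalIntegrable _ _)
    ((by fun_prop : Continuous _).intervalIntegrable _ _) fun s hs => ?_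
  have : c * y s ^ 2 ≤ c * M := mul_le_mul_of_nonneg_left (hM s hs) hc
  exact mul_le_mul_of_nonneg_right (by linarith) (sq_nonneg _)

lemma intervalIntegral_sq_le_of_le {y : ℝ → ℝ} (hy : Continuous y) {t T : ℝ}
    (ht : 0 ≤ t) (htT : t ≤ T) :
    ∫ s in (0:ℝ)..t, y s ^ 2 ≤ ∫ s in (0:ℝ)..T, y s ^ 2 :=
  intervalIntegral.integral_mono_interval le_rfl ht htT
    (Filter.Eventually.of_forall fun _ => sq_nonneg _)
    ((hy.pow 2).intervalIntegrable _ _)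

theorem sq_le_of_sq_le_add_integral_quartic {y : ℝ → ℝ} (hy : Continuous y) {a b c I T : ℝ}
    (hb : 0 ≤ b) (hc : 0 ≤ c) (hcI : c * I ≤ 1 / 2)
    (hineq : ∀ t ∈ Set.Icc 0 T,
      y t ^ 2 ≤ a + ∫ s in (0:ℝ)..t, (b + c * y s ^ 2) * y s ^ 2)
    (hI : ∫ s in (0:ℝ)..T, y s ^ 2 ≤ I) :
    ∀ t ∈ Set.Icc 0 T, y t ^ 2 ≤ 2 * (a + b * I) := by
  intro t ht
  obtain ⟨t₀, ht₀, hmax⟩ := isCompact_Icc.exists_isMaxOn (Set.nonempty_Icc.2 ht.1)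
    (hy.pow 2).continuousOn
  set M := y t₀ ^ 2
  have hle : ∀ s ∈ Set.Icc 0 t, y s ^ 2 ≤ M := fun s hs => hmax hs
  have hI₀ : ∫ s in (0:ℝ)..t₀, y s ^ 2 ≤ I :=
    (intervalIntegral_sq_le_of_le hy ht₀.1 (ht₀.2.trans ht.2)).trans hI
  have hM : M ≤ a + b * I + c * I * M := calc
    M ≤ a + ∫ s in (0:ℝ)..t₀, (b + c * y s ^ 2) * y s ^ 2 := hineq t₀ ⟨ht₀.1, ht₀.2.trans ht.2⟩
    _ ≤ a + (b + c * M) * ∫ s in (0:ℝ)..t₀, y s ^ 2 := by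
      gcongr
      exact intervalIntegral_quartic_le hy hc ht₀.1 fun s hs => hle s ⟨hs.1, hs.2.trans ht₀.2⟩
    _ ≤ a + (b + c * M) * I := by gcongr
    _ = a + b * I + c * I * M := by ring
  exact (hle t ⟨ht.1, le_rfl⟩).trans (le_two_mul_of_le_add_mul_self (sq_nonneg _) hcI hM)

theorem stmt_12_general (A C₁ C₂ γ q K T : ℝ)
    (hA : 0 < A) (hC₁ : 0 < C₁) (hC₂ : 0 < C₂)
    (hq : γ < 2 * q) (hK : 0 < K) :
    ∃ C h₀ : ℝ, 0 < C ∧ 0 < h₀ ∧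
      ∀ h ∈ Set.Ioo (0:ℝ) h₀, ∀ y : ℝ → ℝ,
        Continuous y → y 0 = 0 →
        (∀ t ∈ Set.Icc 0 T, 0 ≤ y t) →
        (∀ t ∈ Set.Icc 0 T,
          (y t) ^ 2 ≤ A * h ^ (2 * q)
            + ∫ s in (0:ℝ)..t, (C₁ + C₂ * h ^ (-γ) * (y s) ^ 2) * (y s) ^ 2) →
        (∫ s in (0:ℝ)..T, (y s) ^ 2) ≤ K * h ^ (2 * q) →
        ∀ t ∈ Set.Icc 0 T, (y t) ^ 2 ≤ C * h ^ (2 * q) := by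
  have he : 0 < 2 * q - γ := by linarith
  refine ⟨2 * (A + C₁ * K), (2 * C₂ * K)⁻¹ ^ (2 * q - γ)⁻¹, by positivity, by positivity, ?_⟩
  intro h hh y hy _ _ hineq hI t ht
  have hsmall : h ^ (2 * q - γ) < (2 * C₂ * K)⁻¹ :=
    (Real.lt_rpow_inv_iff_of_pos hh.1.le (by positivity) he).1 hh.2
  have hcI : C₂ * h ^ (-γ) * (K * h ^ (2 * q)) ≤ 1 / 2 := calc
    C₂ * h ^ (-γ) * (K * h ^ (2 * q)) = C₂ * K * h ^ (2 * q - γ) := by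
      rw [sub_eq_neg_add, Real.rpow_add hh.1]; ring
    _ ≤ C₂ * K * (2 * C₂ * K)⁻¹ := by gcongr
    _ = 1 / 2 := by field_simp
  calc y t ^ 2 ≤ 2 * (A * h ^ (2 * q) + C₁ * (K * h ^ (2 * q))) :=
        sq_le_of_sq_le_add_integral_quartic hy hC₁.le
          (mul_nonneg hC₂.le (Real.rpow_nonneg hh.1.le _)) hcI hineq hI t ht
    _ = 2 * (A + C₁ * K) * h ^ (2 * q) := by ring

/-- Nonlinear (quartic) Gronwall-type continuation argument used in Lemma 4.2:
from `y(t)² ≤ A h^{2q} + ∫₀ᵗ (C₁ + C₂ h^{-γ} y²) y² ds` and the a priori bound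
`∫₀ᵀ y² ≤ K h^{2q}` with `2q > γ`, conclude `y(t)² ≤ C h^{2q}` for `h` small,
with `C` independent of `h`. -/
theorem stmt_12 (A C₁ C₂ γ q K T : ℝ)
    (hA : 0 < A) (hC₁ : 0 < C₁) (hC₂ : 0 < C₂) (hγ : 0 < γ)
    (hq : γ < 2 * q) (hK : 0 < K) (hT : 0 < T) :
    ∃ C h₀ : ℝ, 0 < C ∧ 0 < h₀ ∧
      ∀ h ∈ Set.Ioo (0:ℝ) h₀, ∀ y : ℝ → ℝ,
        Continuous y → y 0 = 0 →
        (∀ t ∈ Set.Icc 0 T, 0 ≤ y t) →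
        (∀ t ∈ Set.Icc 0 T,
          (y t) ^ 2 ≤ A * h ^ (2 * q)
            + ∫ s in (0:ℝ)..t, (C₁ + C₂ * h ^ (-γ) * (y s) ^ 2) * (y s) ^ 2) →
        (∫ s in (0:ℝ)..T, (y s) ^ 2) ≤ K * h ^ (2 * q) →
        ∀ t ∈ Set.Icc 0 T, (y t) ^ 2 ≤ C * h ^ (2 * q) :=
  stmt_12_general A C₁ C₂ γ q K T hA hC₁ hC₂ hq hK
end
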